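/- arXiv:math/0411141 — 9 statements merged into one kernel-verified Lean document; each statement's English description precedes it below -/
import Mathlib

section
/- Suppose r > (3/2)^m and write r = (3/2 + ε)^m with ε = r^{1/m} - 3/2 > 0. If r = g(n₁)·g(n₂)···g(n_m) with n₁ ≤ n₂ ≤ ... ≤ n_m, then n₁ ≤ 1/ε. -/
def g (n : ℕ) : ℚ := (3 * n + 2) / (2 * n + 1)

lemma g_real (k : ℕ) : (g k : ℝ) = (3 * k + 2) / (2 * k + 1) := by
  simp [g]

lemma g_pos_real (k : ℕ) : (0 : ℝ) < (g k : ℝ) := by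
  rw [g_real]; positivity

lemma g_anti {a b : ℕ} (h : a ≤ b) : (g b : ℝ) ≤ (g a : ℝ) := by
  rw [g_real, g_real]
  have ha : (0:ℝ) < 2 * a + 1 := by positivity
  have hb : (0:ℝ) < 2 * b + 1 := by positivity
  rw [div_le_div_iff₀ hb ha]
  have : (a:ℝ) ≤ b := by exact_mod_cast h
  nlinarith

theorem smallest_index_bound (m : ℕ) (hm : 0 < m) (r : ℚ)
    (n : Fin m → ℕ) (hmono : Monotone n)
    (hrep : (r : ℝ) = ∏ i, (g (n i) : ℝ))
    (hbig : ((3 : ℝ) / 2) ^ m < (r : ℝ))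
    (ε : ℝ) (hε : ε = (r : ℝ) ^ ((1 : ℝ) / m) - 3 / 2) (hεpos : 0 < ε) :
    (n ⟨0, hm⟩ : ℝ) ≤ 1 / ε := by
  set N := n ⟨0, hm⟩ with hN
  have hrpos : (0 : ℝ) < (r : ℝ) := lt_trans (by positivity) hbig
  have hgN : (0 : ℝ) < (g N : ℝ) := g_pos_real N
  have hle : (r : ℝ) ≤ (g N : ℝ) ^ m := by
    rw [hrep]
    calc ∏ i, (g (n i) : ℝ) ≤ ∏ _i : Fin m, (g N : ℝ) := by
          apply Finset.prod_le_prod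
          · intro i _; exact (g_pos_real _).le
          · intro i _; exact g_anti (hmono (show (⟨0, hm⟩ : Fin m) ≤ i from Fin.mk_le_of_le_val (Nat.zero_le _)))
      _ = (g N : ℝ) ^ m := by simp
  have hm' : (m : ℝ) ≠ 0 := Nat.cast_ne_zero.mpr hm.ne'
  have hroot : (r : ℝ) ^ ((1 : ℝ) / m) ≤ (g N : ℝ) := by
    have := Real.rpow_le_rpow hrpos.le hle (by positivity : (0:ℝ) ≤ 1 / m)
    calc (r : ℝ) ^ ((1 : ℝ) / m) ≤ ((g N : ℝ) ^ m) ^ ((1:ℝ)/m) := this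
      _ = (g N : ℝ) := by
          rw [← Real.rpow_natCast (g N : ℝ) m, ← Real.rpow_mul hgN.le]
          rw [mul_one_div, div_self hm', Real.rpow_one]
  have hεle : ε ≤ 1 / (2 * (2 * N + 1)) := by
    have : (g N : ℝ) = (3 * N + 2) / (2 * N + 1) := g_real N
    have hd : (0:ℝ) < 2 * N + 1 := by positivity
    rw [hε]
    rw [sub_le_iff_le_add]
    calc (r : ℝ) ^ ((1 : ℝ) / m) ≤ (g N : ℝ) := hroot
      _ = 1 / (2 * (2 * N + 1)) + 3 / 2 := by rw [this]; field_simp; ring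
  rw [le_div_iff₀ hεpos]
  have hd : (0:ℝ) < 2 * (2 * (N:ℝ) + 1) := by positivity
  rw [le_div_iff₀ hd] at hεle
  nlinarith [Nat.cast_nonneg (α := ℝ) N]
end

section
/- The integer 5 is not an element of the Wooley semigroup W₀, i.e., 5 cannot be written as a finite product of rationals of the form (3n+2)/(2n+1). -/
lemma g_eq (n : ℕ) : g n = ((3 * n + 2 : ℤ) : ℚ) / ((2 * n + 1 : ℤ) : ℚ) := by
  unfold g; push_cast; ring

def f3 (n : ℕ) : ℤ := 3 * n + 2
def f2 (n : ℕ) : ℤ := 2 * n + 1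

lemma g_eq' (n : ℕ) : g n = ((f3 n : ℤ) : ℚ) / ((f2 n : ℤ) : ℚ) := by
  unfold f3 f2; push_cast; rw [g_eq]; push_cast; ring

lemma prod_eq (l : List ℕ) :
    (l.map g).prod =
      ((l.map f3).prod : ℚ) /
      ((l.map f2).prod : ℚ) := by
  induction l with
  | nil => simp
  | cons a t ih =>
    simp only [List.map_cons, List.prod_cons, Int.cast_mul, ih, g_eq', div_mul_div_comm]

lemma g_le (n : ℕ) (hn : 3 ≤ n) : g n ≤ 11 / 7 := by
  have hn' : (3 : ℚ) ≤ n := by exact_mod_cast hn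
  have hpos : (0 : ℚ) < 2 * n + 1 := by linarith
  rw [g, div_le_div_iff₀ hpos (by norm_num)]
  linarith

lemma g_ge (n : ℕ) : (3 / 2 : ℚ) ≤ g n := by
  have hn' : (0 : ℚ) ≤ n := n.cast_nonneg
  have hpos : (0 : ℚ) < 2 * n + 1 := by linarith
  rw [g, le_div_iff₀ hpos]
  linarith

lemma prod_le_pow (l : List ℚ) (h : ∀ x ∈ l, 0 ≤ x ∧ x ≤ 11 / 7) :
    l.prod ≤ (11 / 7) ^ l.length := by
  induction l with
  | nil => simp
  | cons a t ih =>
    simp only [List.prod_cons, List.length_cons, pow_succ]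
    rw [mul_comm ((11 / 7 : ℚ) ^ t.length) _]
    obtain ⟨ha0, ha⟩ := h a (by simp)
    have ht := ih (fun x hx => h x (by simp [hx]))
    have htnn : (0 : ℚ) ≤ t.prod :=
      List.prod_nonneg (fun x hx => (h x (by simp [hx])).1)
    exact mul_le_mul ha ht htnn (by norm_num)

lemma pow_le_prod (l : List ℚ) (h : ∀ x ∈ l, (3 / 2 : ℚ) ≤ x) :
    (3 / 2 : ℚ) ^ l.length ≤ l.prod := by
  induction l with
  | nil => simp
  | cons a t ih =>
    simp only [List.prod_cons, List.length_cons, pow_succ]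
    rw [mul_comm ((3 / 2 : ℚ) ^ t.length) _]
    have ha := h a (by simp)
    have ht := ih (fun x hx => h x (by simp [hx]))
    exact mul_le_mul ha ht (by positivity) (by linarith)

theorem five_not_wooley :
    ¬ ∃ l : List ℕ, l ≠ [] ∧ (5 : ℚ) = (l.map g).prod := by
  rintro ⟨l, hne, h5⟩
  set N : ℤ := (l.map f3).prod with hN
  set D : ℤ := (l.map f2).prod with hD
  have hDpos : 0 < D := by
    apply List.prod_pos
    intro a ha
    simp only [List.mem_map] at ha
    obtain ⟨n, _, rfl⟩ := ha
    unfold f2; omega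
  have hDq : ((D : ℚ)) ≠ 0 := by exact_mod_cast hDpos.ne'
  have key : 5 * D = N := by
    have h := h5.trans (prod_eq l)
    rw [eq_div_iff hDq] at h
    exact_mod_cast h
  -- no factor of 2 in N
  have h2D : ¬ (2 : ℤ) ∣ D := by
    intro h
    rcases (Int.prime_two.dvd_prod_iff).mp h with ⟨a, ha, hdvd⟩
    simp only [List.mem_map] at ha
    obtain ⟨n, _, rfl⟩ := ha
    unfold f2 at hdvd; omega
  have h2N : ¬ (2 : ℤ) ∣ N := by
    rw [← key]
    intro h
    rcases Int.prime_two.dvd_mul.mp h with h | h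
    · norm_num at h
    · exact h2D h
  -- no factor of 3 in N
  have h3N : ¬ (3 : ℤ) ∣ N := by
    intro h
    rcases (Int.prime_three.dvd_prod_iff).mp h with ⟨a, ha, hdvd⟩
    simp only [List.mem_map] at ha
    obtain ⟨n, _, rfl⟩ := ha
    unfold f3 at hdvd; omega
  -- every n in l is odd
  have hodd : ∀ n ∈ l, n % 2 = 1 := by
    intro n hn
    by_contra hc
    have hmem : f3 n ∈ l.map f3 :=
      List.mem_map.mpr ⟨n, hn, rfl⟩
    have hdvd : (3 * (n : ℤ) + 2) ∣ N := List.dvd_prod hmem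
    have h2 : (2 : ℤ) ∣ f3 n := by
      unfold f3
      have : n % 2 = 0 := by omega
      obtain ⟨k, rfl⟩ : ∃ k, n = 2 * k := ⟨n / 2, by omega⟩
      exact ⟨3 * k + 1, by push_cast; ring⟩
    exact h2N (h2.trans hdvd)
  -- no n = 1
  have hne1 : ∀ n ∈ l, n ≠ 1 := by
    intro n hn hc
    subst hc
    have hmem : ((3 : ℤ)) ∈ l.map f2 :=
      List.mem_map.mpr ⟨1, hn, by unfold f2; norm_num⟩
    have hdvd : (3 : ℤ) ∣ D := List.dvd_prod hmem
    exact h3N (key ▸ hdvd.mul_left 5)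
  have hge3 : ∀ n ∈ l, 3 ≤ n := by
    intro n hn
    have := hodd n hn
    have := hne1 n hn
    omega
  -- bounds
  have hub : (l.map g).prod ≤ (11 / 7 : ℚ) ^ l.length := by
    have := prod_le_pow (l.map g) ?_
    · simpa using this
    · intro x hx
      simp only [List.mem_map] at hx
      obtain ⟨n, hn, rfl⟩ := hx
      exact ⟨le_trans (by norm_num) (g_ge n), g_le n (hge3 n hn)⟩
  have hlb : (3 / 2 : ℚ) ^ l.length ≤ (l.map g).prod := by
    have := pow_le_prod (l.map g) ?_
    · simpa using this
    · intro x hx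
      simp only [List.mem_map] at hx
      obtain ⟨n, hn, rfl⟩ := hx
      exact g_ge n
  rcases le_or_gt l.length 3 with hk3 | hk4
  · have h1 : (5 : ℚ) ≤ (11 / 7) ^ 3 :=
      (h5 ▸ hub).trans (pow_le_pow_right₀ (by norm_num) hk3)
    norm_num at h1
  · have h1 : (3 / 2 : ℚ) ^ 4 ≤ 5 :=
      le_trans (pow_le_pow_right₀ (by norm_num) hk4) (h5 ▸ hlb)
    norm_num at h1
end

section
/- The integer 20 is an irreducible element of the Wooley integer semigroup W₀(ℤ): it belongs to W₀(ℤ), and it cannot be written as a product of two elements of W₀(ℤ). -/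
/-- Membership in the Wooley integer semigroup `W₀(ℤ)`. -/
def WooleyInt (m : ℕ) : Prop :=
  0 < m ∧ ∃ l : List ℕ, l ≠ [] ∧ (m : ℚ) = (l.map g).prod

namespace WooleyAux

theorem rat_mul_num_dvd (q r : ℚ) : (q * r).num ∣ q.num * r.num := by
  rw [Rat.mul_num]
  have hg : ((Nat.gcd (q.num * r.num).natAbs (q.den * r.den) : ℤ)) ∣ q.num * r.num :=
    Int.dvd_natAbs.mp (Int.natCast_dvd_natCast.mpr (Nat.gcd_dvd_left _ _))
  exact ⟨_, (Int.ediv_mul_cancel hg).symm⟩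

theorem g_eq (n : ℕ) : g n = Rat.divInt (3 * n + 2) (2 * n + 1) := by
  rw [Rat.divInt_eq_div, g]
  push_cast
  ring

theorem odd_of_dvd_odd {a b : ℕ} (h : a ∣ b) (hb : Odd b) : Odd a := by
  rcases Nat.even_or_odd a with he | ho
  · obtain ⟨c, hc⟩ := he.two_dvd.trans h
    obtain ⟨k, hk⟩ := hb
    omega
  · exact ho

/-- The key arithmetic property preserved by products of `g`. -/
def Good (q : ℚ) : Prop := Odd q.den ∧ ¬ (3 : ℤ) ∣ q.num

theorem good_one : Good 1 := by constructor <;> decide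

theorem good_g (n : ℕ) : Good (g n) := by
  constructor
  · have hd : (g n).den ∣ 2 * n + 1 := by
      have := Rat.den_dvd (3 * n + 2 : ℤ) (2 * n + 1 : ℤ)
      rw [← g_eq] at this
      exact_mod_cast this
    exact odd_of_dvd_odd hd ⟨n, by ring⟩
  · intro h3
    have hn : (g n).num ∣ (3 * n + 2 : ℤ) := by
      rw [g_eq]; exact Rat.num_dvd _ (by positivity)
    have : (3 : ℤ) ∣ (3 * (n : ℤ) + 2) := h3.trans hn
    omega

theorem good_mul {q r : ℚ} (hq : Good q) (hr : Good r) : Good (q * r) := by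
  constructor
  · exact odd_of_dvd_odd (Rat.mul_den_dvd q r) (hq.1.mul hr.1)
  · intro h3
    have := h3.trans (rat_mul_num_dvd q r)
    rcases (Int.prime_three.dvd_mul.mp this) with h | h
    · exact hq.2 h
    · exact hr.2 h

theorem good_prod (l : List ℕ) : Good ((l.map g).prod) := by
  induction l with
  | nil => simpa using good_one
  | cons a t ih => simpa using good_mul (good_g a) ih

theorem g_pos (n : ℕ) : 0 < g n := by
  rw [g]; positivity

theorem g_gt (n : ℕ) : (3 / 2 : ℚ) < g n := by
  rw [g, div_lt_div_iff₀ (by norm_num) (by positivity)]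
  have : (0 : ℚ) ≤ n := Nat.cast_nonneg n
  nlinarith

theorem g_anti {m n : ℕ} (h : m ≤ n) : g n ≤ g m := by
  rw [g, g, div_le_div_iff₀ (by positivity) (by positivity)]
  have h' : (m : ℚ) ≤ n := Nat.cast_le.mpr h
  nlinarith [Nat.cast_nonneg (α := ℚ) m, Nat.cast_nonneg (α := ℚ) n]

theorem prod_lower (l : List ℕ) : (3 / 2 : ℚ) ^ l.length ≤ (l.map g).prod := by
  induction l with
  | nil => simp
  | cons a t ih =>
      simp only [List.map_cons, List.prod_cons, List.length_cons, pow_succ]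
      rw [mul_comm ((3 / 2 : ℚ) ^ t.length) (3 / 2 : ℚ)]
      exact mul_le_mul (g_gt a).le ih (by positivity) (g_pos a).le

theorem prod_pos (l : List ℕ) : 0 < (l.map g).prod :=
  lt_of_lt_of_le (by positivity) (prod_lower l)

theorem prod_upper {b : ℕ} (l : List ℕ) (h : ∀ m ∈ l, b ≤ m) :
    (l.map g).prod ≤ g b ^ l.length := by
  induction l with
  | nil => simp
  | cons a t ih =>
      simp only [List.map_cons, List.prod_cons, List.length_cons, pow_succ]
      rw [mul_comm (g b ^ t.length) (g b)]
      exact mul_le_mul (g_anti (h a (by simp))) (ih (fun m hm => h m (by simp [hm])))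
        (prod_pos t).le (g_pos b).le

/-- "No product": no list of length `k` with all entries `≥ b` has `g`-product `q`. -/
abbrev NP (q : ℚ) (k b : ℕ) : Prop :=
  ∀ l : List ℕ, l.length = k → (∀ m ∈ l, b ≤ m) → (l.map g).prod ≠ q

theorem np_den {q : ℚ} (k b : ℕ) (h : ¬ Odd q.den) : NP q k b := by
  intro l _ _ hp
  exact h (hp ▸ (good_prod l).1)

theorem np_num {q : ℚ} (k b : ℕ) (h : (3 : ℤ) ∣ q.num) : NP q k b := by
  intro l _ _ hp
  exact (good_prod l).2 (hp ▸ h)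

theorem np_size {q : ℚ} (k b : ℕ) (h : q < (3 / 2 : ℚ) ^ k) : NP q k b := by
  intro l hlen _ hp
  have := prod_lower l
  rw [hlen, hp] at this
  linarith

theorem np_big {q : ℚ} (k b : ℕ) (h : g b ^ k < q) : NP q k b := by
  intro l hlen hb hp
  have := prod_upper l hb
  rw [hlen, hp] at this
  linarith

theorem np_step {q : ℚ} (k b : ℕ) (h1 : NP (q / g b) k b) (h2 : NP q (k + 1) (b + 1)) :
    NP q (k + 1) b := by
  intro l hlen hb hp
  by_cases hmem : b ∈ l
  · have hperm : List.Perm l (b :: l.erase b) := List.perm_cons_erase hmem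
    have hprodeq : (l.map g).prod = g b * ((l.erase b).map g).prod := by
      have := (hperm.map g).prod_eq
      simpa using this
    have hlen' : (l.erase b).length = k := by
      have := hperm.length_eq
      simp at this
      omega
    refine h1 (l.erase b) hlen' (fun m hm => hb m (List.mem_of_mem_erase hm)) ?_
    rw [eq_div_iff (g_pos b).ne', mul_comm, ← hprodeq]
    exact hp
  · refine h2 l hlen (fun m hm => ?_) hp
    rcases Nat.eq_or_lt_of_le (hb m hm) with h | h
    · exact absurd (h ▸ hm) hmem
    · exact h

theorem g0 : g 0 = 2 := by norm_num [g]
theorem g1 : g 1 = 5 / 3 := by norm_num [g]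
theorem g2 : g 2 = 8 / 5 := by norm_num [g]
theorem g3 : g 3 = 11 / 7 := by norm_num [g]

theorem npA : NP (5 / 2) 2 0 := by
  apply np_den
  norm_num [Nat.odd_iff]

theorem npC : NP 5 3 0 := by
  have h2 : NP ((5 : ℚ) / g 0) 2 0 := by
    rw [g0]
    exact npA
  have h3 : NP (5 : ℚ) 3 1 := by
    apply np_big
    rw [g1]
    norm_num
  exact np_step 2 0 h2 h3

theorem npD : NP 10 4 0 := by
  have h1 : NP ((10 : ℚ) / g 0) 3 0 := by
    rw [g0, show (10 : ℚ) / 2 = 5 by norm_num]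
    exact npC
  have h2 : NP (10 : ℚ) 4 1 := by
    apply np_big
    rw [g1]
    norm_num
  exact np_step 3 0 h1 h2

theorem npE : NP 10 5 0 := by
  have h53 : NP (10 : ℚ) 5 3 := by
    apply np_big
    rw [g3]
    norm_num
  have h52 : NP (10 : ℚ) 5 2 := by
    refine np_step 4 2 ?_ h53
    rw [g2, show (10 : ℚ) / (8 / 5) = 25 / 4 by norm_num]
    apply np_den
    norm_num [Nat.odd_iff]
  have h51 : NP (10 : ℚ) 5 1 := by
    refine np_step 4 1 ?_ h52
    rw [g1, show (10 : ℚ) / (5 / 3) = 6 by norm_num]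
    apply np_num
    norm_num
  refine np_step 4 0 ?_ h51
  rw [g0, show (10 : ℚ) / 2 = 5 by norm_num]
  apply np_size
  norm_num

theorem pow_ge {k j : ℕ} (h : j ≤ k) : (3 / 2 : ℚ) ^ j ≤ (3 / 2 : ℚ) ^ k :=
  pow_le_pow_right₀ (by norm_num) h

theorem pow2_le {k j : ℕ} (h : k ≤ j) : (2 : ℚ) ^ k ≤ (2 : ℚ) ^ j :=
  pow_le_pow_right₀ (by norm_num) h

theorem length_bounds {l : List ℕ} {q : ℚ} (hp : (l.map g).prod = q) :
    (3 / 2 : ℚ) ^ l.length ≤ q ∧ q ≤ 2 ^ l.length := by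
  constructor
  · rw [← hp]; exact prod_lower l
  · rw [← hp]
    have := prod_upper l (b := 0) (fun m _ => Nat.zero_le m)
    rwa [g0] at this

theorem not_wooley5 : ¬ WooleyInt 5 := by
  rintro ⟨-, l, hne, hprod⟩
  have hp : (l.map g).prod = (5 : ℚ) := hprod.symm.trans (by norm_num)
  obtain ⟨hlo, hhi⟩ := length_bounds hp
  have hk3 : l.length = 3 := by
    by_contra hk
    rcases Nat.lt_or_ge l.length 3 with h | h
    · have h22 : (2 : ℚ) ^ l.length ≤ 4 := by
        calc (2 : ℚ) ^ l.length ≤ 2 ^ 2 := pow2_le (by omega)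
        _ = 4 := by norm_num
      linarith
    · have h34 : (3 / 2 : ℚ) ^ 4 ≤ (3 / 2 : ℚ) ^ l.length := pow_ge (by omega)
      have : ((3 : ℚ) / 2) ^ 4 = 81 / 16 := by norm_num
      linarith
  exact npC l hk3 (fun m _ => Nat.zero_le m) hp

theorem not_wooley10 : ¬ WooleyInt 10 := by
  rintro ⟨-, l, hne, hprod⟩
  have hp : (l.map g).prod = (10 : ℚ) := hprod.symm.trans (by norm_num)
  obtain ⟨hlo, hhi⟩ := length_bounds hp
  have hk : l.length = 4 ∨ l.length = 5 := by
    by_contra hk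
    push_neg at hk
    rcases Nat.lt_or_ge l.length 4 with h | h
    · have h23 : (2 : ℚ) ^ l.length ≤ 8 := by
        calc (2 : ℚ) ^ l.length ≤ 2 ^ 3 := pow2_le (by omega)
        _ = 8 := by norm_num
      linarith
    · have h36 : (3 / 2 : ℚ) ^ 6 ≤ (3 / 2 : ℚ) ^ l.length := pow_ge (by omega)
      have : ((3 : ℚ) / 2) ^ 6 = 729 / 64 := by norm_num
      linarith
  rcases hk with h | h
  · exact npD l h (fun m _ => Nat.zero_le m) hp
  · exact npE l h (fun m _ => Nat.zero_le m) hp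

theorem wooley_two_le {m : ℕ} (h : WooleyInt m) : 2 ≤ m := by
  obtain ⟨hpos, l, hne, hprod⟩ := h
  have h1 : 1 ≤ l.length := List.length_pos_iff.mpr hne
  have hlow := prod_lower l
  have h32 : (3 / 2 : ℚ) ^ 1 ≤ (3 / 2 : ℚ) ^ l.length := pow_ge h1
  have hm : (1 : ℚ) < (m : ℚ) := by
    rw [hprod]
    calc (1 : ℚ) < (3 / 2 : ℚ) ^ 1 := by norm_num
    _ ≤ (3 / 2 : ℚ) ^ l.length := h32
    _ ≤ _ := hlow
  exact_mod_cast Nat.one_lt_cast.mp hm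

end WooleyAux

theorem twenty_is_wooley_number :
    WooleyInt 20 ∧ ¬ ∃ a b : ℕ, WooleyInt a ∧ WooleyInt b ∧ 20 = a * b := by
  constructor
  · refine ⟨by norm_num, [3, 3, 5, 8, 27, 32, 41], by simp, ?_⟩
    norm_num [g]
  · rintro ⟨a, b, ha, hb, hab⟩
    have ha2 := WooleyAux.wooley_two_le ha
    have hb2 := WooleyAux.wooley_two_le hb
    have hale : a ≤ 10 := by nlinarith
    interval_cases a
    · have h10 : b = 10 := by omega
      exact WooleyAux.not_wooley10 (h10 ▸ hb)
    · omega
    · have h5 : b = 5 := by omega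
      exact WooleyAux.not_wooley5 (h5 ▸ hb)
    · exact WooleyAux.not_wooley5 ha
    · omega
    · omega
    · omega
    · omega
    · exact WooleyAux.not_wooley10 ha
end

section
/- The integer 3 is not an element of the wild integer semigroup W(ℤ), i.e., 3 cannot be written as 2^{-j} times a finite product of rationals of the form (3n+2)/(2n+1). -/
instance : Fact (Nat.Prime 3) := ⟨by norm_num⟩

lemma g_pos (n : ℕ) : 0 < g n := by
  unfold g; positivity

lemma v3_g (n : ℕ) : padicValRat 3 (g n) ≤ 0 := by
  have h : g n = ((3 * n + 2 : ℕ) : ℚ) / ((2 * n + 1 : ℕ) : ℚ) := by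
    unfold g; push_cast; ring
  rw [h, padicValRat.div (by positivity) (by positivity)]
  have h1 : padicValRat 3 ((3 * n + 2 : ℕ) : ℚ) = 0 := by
    rw [padicValRat.of_nat]
    norm_cast
    apply padicValNat.eq_zero_of_not_dvd
    omega
  have h2 : (0 : ℤ) ≤ padicValRat 3 ((2 * n + 1 : ℕ) : ℚ) := by
    rw [padicValRat.of_nat]; positivity
  omega

lemma prod_pos (l : List ℕ) : 0 < (l.map g).prod := by
  induction l with
  | nil => simp
  | cons a t ih => simp only [List.map_cons, List.prod_cons]; exact mul_pos (g_pos a) ih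

lemma v3_prod (l : List ℕ) : padicValRat 3 (l.map g).prod ≤ 0 := by
  induction l with
  | nil => simp
  | cons a t ih =>
    simp only [List.map_cons, List.prod_cons]
    rw [padicValRat.mul (g_pos a).ne' (prod_pos t).ne']
    have := v3_g a
    omega

theorem three_not_wild :
    ¬ ∃ (j : ℕ) (l : List ℕ), (3 : ℚ) = (1 / 2) ^ j * (l.map g).prod := by
  rintro ⟨j, l, h⟩
  have hv := congrArg (padicValRat 3) h
  rw [padicValRat.mul (by positivity) (prod_pos l).ne',
    padicValRat.pow ((1 : ℚ) / 2)] at hv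
  have h2 : padicValRat 3 ((1 : ℚ) / 2) = 0 := by
    rw [padicValRat.div one_ne_zero two_ne_zero]
    have : padicValRat 3 (2 : ℚ) = 0 := by
      have : ((2 : ℕ) : ℚ) = (2 : ℚ) := by norm_num
      rw [← this, padicValRat.of_nat]
      norm_cast
      exact padicValNat.eq_zero_of_not_dvd (by norm_num)
    simp [this, padicValRat.one]
  have h3 : padicValRat 3 (3 : ℚ) = 1 := by
    have : ((3 : ℕ) : ℚ) = (3 : ℚ) := by norm_num
    rw [← this, padicValRat.of_nat]
    norm_cast
    simp [padicValNat.self]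
  have := v3_prod l
  rw [h3, h2] at hv
  omega
end

section
/- If a multiplicative sub-semigroup S of the positive integers contains, for some infinite set D of primes, at least one multiple of each p ∈ D, then S contains infinitely many irreducible elements (elements not expressible as a product of two elements of S both greater than 1). -/
theorem infinitely_many_irreducibles (S : Set ℕ)
    (hpos : ∀ a ∈ S, 0 < a)
    (hmul : ∀ a ∈ S, ∀ b ∈ S, a * b ∈ S)
    (D : Set ℕ) (hDinf : D.Infinite) (hDprime : ∀ p ∈ D, p.Prime)
    (hDmult : ∀ p ∈ D, ∃ m ∈ S, p ∣ m) :
    {m ∈ S | 1 < m ∧ ¬ ∃ a ∈ S, ∃ b ∈ S, 1 < a ∧ 1 < b ∧ m = a * b}.Infinite := by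
  set T := {m ∈ S | 1 < m ∧ ¬ ∃ a ∈ S, ∃ b ∈ S, 1 < a ∧ 1 < b ∧ m = a * b} with hTdef
  -- every prime dividing an element m > 1 of S divides some element of T
  have aux : ∀ m, m ∈ S → 1 < m → ∀ p, p.Prime → p ∣ m → ∃ q ∈ T, p ∣ q := by
    intro m
    induction m using Nat.strong_induction_on with
    | _ m ih =>
      intro hmS hm1 p hp hpm
      by_cases hirr : ∃ a ∈ S, ∃ b ∈ S, 1 < a ∧ 1 < b ∧ m = a * b
      · obtain ⟨a, haS, b, hbS, ha1, hb1, rfl⟩ := hirr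
        rcases hp.dvd_mul.mp hpm with hpa | hpb
        · exact ih a (lt_mul_of_one_lt_right (by omega) hb1) haS ha1 p hp hpa
        · exact ih b (lt_mul_of_one_lt_left (by omega) ha1) hbS hb1 p hp hpb
      · exact ⟨m, ⟨hmS, hm1, hirr⟩, hpm⟩
  by_contra h
  rw [Set.not_infinite] at h
  have hDfin : D.Finite := by
    have hsub : D ⊆ ↑(h.toFinset.biUnion Nat.primeFactors) := by
      intro p hpD
      obtain ⟨m, hmS, hpm⟩ := hDmult p hpD
      have hp := hDprime p hpD
      have hm1 : 1 < m := by
        have h0 := hpos m hmS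
        have hle := Nat.le_of_dvd h0 hpm
        have h2 := hp.two_le
        omega
      obtain ⟨q, hqT, hpq⟩ := aux m hmS hm1 p hp hpm
      simp only [Finset.coe_biUnion, Set.mem_iUnion, Finset.mem_coe]
      refine ⟨q, h.mem_toFinset.mpr hqT, ?_⟩
      exact Nat.mem_primeFactors.mpr ⟨hp, hpq, by have := hqT.2.1; omega⟩
    exact Set.Finite.subset (Finset.finite_toSet _) hsub
  exact hDinf hDfin
end

section
/- Every positive integer less than 6q that is relatively prime to 6q and is NOT q-smooth (i.e., has some prime factor ≥ q) is either a prime p' with q < p' < 6q, or of the form 5p' for a prime p' with q ≤ p' < (6/5)q. -/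
theorem non_smooth_classification (q : ℕ) (hq : q.Prime) (hq5 : 5 ≤ q)
    (m : ℕ) (hm0 : 0 < m) (hm : m < 6 * q) (hcop : Nat.Coprime m (6 * q))
    (hns : ∃ p : ℕ, p.Prime ∧ p ∣ m ∧ q ≤ p) :
    (m.Prime ∧ q < m ∧ m < 6 * q) ∨
      (∃ p' : ℕ, p'.Prime ∧ m = 5 * p' ∧ q ≤ p' ∧ 5 * p' < 6 * q) := by
  obtain ⟨p, hp, hpm, hqp⟩ := hns
  obtain ⟨k, hk⟩ := hpm
  -- p ≠ q since m coprime to 6q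
  have hpq : p ≠ q := by
    rintro rfl
    have : p ∣ 6 * p := dvd_mul_left p 6
    have := Nat.Coprime.eq_one_of_dvd (Nat.Coprime.coprime_dvd_left ⟨k, hk⟩ hcop) this
    exact hp.one_lt.ne' this
  have hqlt : q < p := lt_of_le_of_ne hqp (Ne.symm hpq)
  have hk0 : 0 < k := by
    rcases Nat.eq_zero_or_pos k with h | h
    · simp [h] at hk; omega
    · exact h
  have hk6 : k < 6 := by
    nlinarith [hp.two_le, hk0]
  -- k coprime to 6
  have hkdvd : k ∣ m := ⟨p, by rw [hk, Nat.mul_comm]⟩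
  have hk6cop : Nat.Coprime k 6 := by
    have h1 : Nat.Coprime m 6 := Nat.Coprime.coprime_dvd_right ⟨q, rfl⟩ hcop
    exact Nat.Coprime.coprime_dvd_left hkdvd h1
  interval_cases k
  · left
    have : m = p := by omega
    exact ⟨this ▸ hp, by omega, hm⟩
  · exfalso; revert hk6cop; decide
  · exfalso; revert hk6cop; decide
  · exfalso; revert hk6cop; decide
  · right
    exact ⟨p, hp, by omega, hqp, by omega⟩
end

section
/- If the weak 3x+1 conjecture holds (i.e., 1/m ∈ W for every positive integer m), then every integer element of W(ℤ) greater than 1 factors into primes all of which lie in W(ℤ); in particular every irreducible element of W(ℤ) greater than 1 is prime. -/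
/-- Membership in the wild semigroup `W`. -/
def WildMem (r : ℚ) : Prop :=
  ∃ (j : ℕ) (l : List ℕ), r = (1 / 2) ^ j * (l.map g).prod

/-- Membership in the wild integer semigroup `W(ℤ)`. -/
def WildInt (m : ℕ) : Prop := 0 < m ∧ WildMem (m : ℚ)

theorem weak_3x1_implies_wild_numbers_prime
    (hweak : ∀ m : ℕ, 0 < m → WildMem (1 / (m : ℚ))) :
    (∀ n : ℕ, WildInt n → 1 < n → ∀ p : ℕ, p.Prime → p ∣ n → WildInt p) ∧
    (∀ n : ℕ, WildInt n → 1 < n →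
      (¬ ∃ a b : ℕ, WildInt a ∧ WildInt b ∧ 1 < a ∧ 1 < b ∧ n = a * b) →
      n.Prime) := by
  have hmul : ∀ r s : ℚ, WildMem r → WildMem s → WildMem (r * s) := by
    rintro r s ⟨j, l, rfl⟩ ⟨j', l', rfl⟩
    exact ⟨j + j', l ++ l', by rw [List.map_append, List.prod_append, pow_add]; ring⟩
  -- if n ∈ W(ℤ) and a * b = n with a, b > 0, then a ∈ W(ℤ)
  have hdvd : ∀ n a b : ℕ, WildInt n → a * b = n → 0 < a → 0 < b → WildInt a := by
    rintro n a b ⟨hn, hw⟩ hab ha hb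
    refine ⟨ha, ?_⟩
    have heq : (a : ℚ) = (n : ℚ) * (1 / (b : ℚ)) := by
      have : (a : ℚ) * b = n := by exact_mod_cast congrArg (Nat.cast : ℕ → ℚ) hab
      field_simp [Nat.cast_pos.mpr hb] at this ⊢
      linarith
    rw [heq]
    exact hmul _ _ hw (hweak b hb)
  constructor
  · intro n hn h1 p hp hpn
    obtain ⟨k, hk⟩ := hpn
    have hk0 : 0 < k := by
      rcases Nat.eq_zero_or_pos k with h | h
      · subst h; simp at hk; omega
      · exact h
    exact hdvd n p k hn hk.symm hp.pos hk0
  · intro n hn h1 hirr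
    by_contra hnp
    obtain ⟨m, hm, hm2, hmn⟩ := Nat.exists_dvd_of_not_prime2 h1 hnp
    obtain ⟨k, hk⟩ := hm
    have hk1 : 1 < k := by nlinarith
    exact hirr ⟨m, k, hdvd n m k hn hk.symm (by omega) (by omega),
      hdvd n k m hn (by rw [hk]; exact Nat.mul_comm k m) (by omega) (by omega), by omega, hk1, hk⟩
end

section
/- If W is the submonoid of positive rationals generated by {(3n+2)/(2n+1) : n ∈ ℕ} and 1/2, and if W contains every prime p ≠ 3 as well as 1/m for every positive integer m, then W equals the set of all positive rationals a/b (in lowest terms) with gcd(a, 3) = 1. -/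
/-- The wild semigroup `W` as a submonoid of `ℚ`. -/
def W : Submonoid ℚ := Submonoid.closure (Set.range g ∪ {1 / 2})

lemma mul_num_dvd' (x y : ℚ) : (x * y).num ∣ x.num * y.num := by
  have h : x * y = Rat.divInt (x.num * y.num) ((x.den : ℤ) * (y.den : ℤ)) := by
    conv_lhs => rw [← Rat.num_divInt_den x, ← Rat.num_divInt_den y]
    rw [Rat.divInt_mul_divInt]
  rw [h]
  exact Rat.num_dvd _ (by positivity)

lemma list_prod_mem_W (hprimes : ∀ p : ℕ, p.Prime → p ≠ 3 → (p : ℚ) ∈ W)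
    (l : List ℕ) (hl : ∀ p ∈ l, p.Prime ∧ p ≠ 3) : ((l.prod : ℕ) : ℚ) ∈ W := by
  induction l with
  | nil => simpa using W.one_mem
  | cons p t ih =>
    have hp := hl p (by simp)
    have ht : ((t.prod : ℕ) : ℚ) ∈ W := ih fun q hq => hl q (by simp [hq])
    have : ((p * t.prod : ℕ) : ℚ) = (p : ℚ) * ((t.prod : ℕ) : ℚ) := by push_cast; ring
    simpa [List.prod_cons, this] using W.mul_mem (hprimes p hp.1 hp.2) ht

theorem wild_semigroup_structure
    (hprimes : ∀ p : ℕ, p.Prime → p ≠ 3 → (p : ℚ) ∈ W)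
    (hweak : ∀ m : ℕ, 0 < m → (1 / (m : ℚ)) ∈ W) :
    ∀ r : ℚ, r ∈ W ↔ 0 < r ∧ Int.gcd r.num 3 = 1 := by
  intro r
  constructor
  · intro hr
    have key : 0 < r ∧ ¬ (3 : ℤ) ∣ r.num := by
      refine Submonoid.closure_induction ?_ ?_ ?_ hr
      · rintro x (⟨n, rfl⟩ | hx)
        · have h : g n = Rat.divInt (3 * n + 2 : ℤ) (2 * n + 1 : ℤ) := by
            unfold g
            rw [Rat.divInt_eq_div]
            push_cast
            ring
          constructor
          · unfold g
            positivity
          · intro hdvd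
            have h2 : (g n).num ∣ (3 * n + 2 : ℤ) := by
              rw [h]; exact Rat.num_dvd _ (by positivity)
            have h3 : (3 : ℤ) ∣ (3 * n + 2 : ℤ) := hdvd.trans h2
            omega
        · simp only [Set.mem_singleton_iff] at hx
          subst hx
          norm_num
      · norm_num
      · rintro x y - - ⟨hx, hx3⟩ ⟨hy, hy3⟩
        refine ⟨mul_pos hx hy, fun hdvd => ?_⟩
        have := hdvd.trans (mul_num_dvd' x y)
        rcases (Int.Prime.dvd_mul' (by norm_num) this) with h | h
        · exact hx3 h
        · exact hy3 h
    refine ⟨key.1, ?_⟩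
    have h3 := key.2
    have hd1 : (↑(Int.gcd r.num 3) : ℤ) ∣ r.num := Int.gcd_dvd_left _ _
    have hd2 : (↑(Int.gcd r.num 3) : ℤ) ∣ 3 := Int.gcd_dvd_right _ _
    rcases (Nat.dvd_prime Nat.prime_three).1 (by exact_mod_cast hd2) with h | h
    · exact h
    · exact absurd (h ▸ hd1) (by exact_mod_cast h3)
  · rintro ⟨hpos, hgcd⟩
    have hnum : 0 < r.num := Rat.num_pos.2 hpos
    set a : ℕ := r.num.toNat with ha
    have hra : (r.num : ℚ) = (a : ℚ) := by exact_mod_cast congrArg (fun z : ℤ => (z : ℚ)) (Int.toNat_of_nonneg hnum.le).symm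
    have h3a : ¬ 3 ∣ a := by
      intro h
      have h' : (3 : ℤ) ∣ r.num := by
        have := Int.natCast_dvd_natCast.2 h
        simpa [ha, Int.toNat_of_nonneg hnum.le] using this
      have hdd : (3 : ℤ) ∣ ↑(Int.gcd r.num 3) := Int.dvd_coe_gcd h' dvd_rfl
      rw [hgcd] at hdd
      norm_num at hdd
    have ha0 : a ≠ 0 := by
      intro h
      rw [ha] at h
      omega
    have haW : (a : ℚ) ∈ W := by
      have := list_prod_mem_W hprimes a.primeFactorsList ?_
      · rwa [Nat.prod_primeFactorsList ha0] at this
      · intro p hp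
        refine ⟨Nat.prime_of_mem_primeFactorsList hp, ?_⟩
        rintro rfl
        exact h3a (Nat.dvd_of_mem_primeFactorsList hp)
    have hdW : (1 / (r.den : ℚ)) ∈ W := hweak r.den r.pos
    have hrw : r = (a : ℚ) * (1 / (r.den : ℚ)) := by
      rw [← hra]
      rw [mul_one_div]
      exact (Rat.num_div_den r).symm
    rw [hrw]
    exact W.mul_mem haW hdW
end

section
/- For every prime q > 10^4, the number of integers in [1, 6q] coprime to 6q whose prime factors are all < q exceeds φ(6q)/2 = q - 1. -/
open Finset ArithmeticFunction
open scoped ArithmeticFunction.Moebius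

private lemma count_coprime_Ioc (N x : ℕ) (hN : 0 < N) :
    ((((Finset.Ioc 0 x).filter (fun n => Nat.Coprime n N)).card : ℤ))
      = ∑ d ∈ N.divisors, (μ d : ℤ) * ((x / d : ℕ) : ℤ) := by
  have key : ∀ m : ℕ, (∑ d ∈ m.divisors, μ d) = if m = 1 then 1 else 0 := by
    intro m
    rw [← coe_mul_zeta_apply, moebius_mul_coe_zeta, ArithmeticFunction.one_apply]
  calc ((((Finset.Ioc 0 x).filter (fun n => Nat.Coprime n N)).card : ℤ))
      = ∑ n ∈ Finset.Ioc 0 x, if Nat.Coprime n N then (1:ℤ) else 0 := by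
        rw [Finset.card_filter]; push_cast; rfl
    _ = ∑ n ∈ Finset.Ioc 0 x, ∑ d ∈ N.divisors, if d ∣ n then (μ d : ℤ) else 0 := by
        refine Finset.sum_congr rfl fun n hn => ?_
        rw [← Finset.sum_filter]
        have hgcd : (N.divisors.filter (· ∣ n)) = (Nat.gcd n N).divisors := by
          ext d
          simp only [Nat.mem_divisors, Finset.mem_filter, Nat.dvd_gcd_iff]
          constructor
          · rintro ⟨⟨h1, _⟩, h2⟩; exact ⟨⟨h2, h1⟩, Nat.gcd_ne_zero_right hN.ne'⟩
          · rintro ⟨⟨h2, h1⟩, _⟩; exact ⟨⟨h1, hN.ne'⟩, h2⟩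
        rw [hgcd, key]
    _ = ∑ d ∈ N.divisors, ∑ n ∈ Finset.Ioc 0 x, if d ∣ n then (μ d : ℤ) else 0 :=
        Finset.sum_comm
    _ = ∑ d ∈ N.divisors, (μ d : ℤ) * ((x / d : ℕ) : ℤ) := by
        refine Finset.sum_congr rfl fun d hd => ?_
        rw [← Finset.sum_filter, Finset.sum_const, ← Nat.Ioc_filter_dvd_card_eq_div x d,
          nsmul_eq_mul, mul_comm]

private lemma moebius_totient_sum (N : ℕ) (hN : 0 < N) :
    ∑ d ∈ N.divisors, (μ d : ℤ) * ((N / d : ℕ) : ℤ) = (Nat.totient N : ℤ) := by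
  have h := (ArithmeticFunction.sum_eq_iff_sum_mul_moebius_eq
      (R := ℤ) (f := fun n => (Nat.totient n : ℤ)) (g := fun n => (n : ℤ))).mp
    (fun n hn => by exact_mod_cast congrArg (Nat.cast : ℕ → ℤ) (Nat.sum_totient n))
    N hN
  rw [← Nat.sum_divisorsAntidiagonal (f := fun d e => (μ d : ℤ) * (e : ℤ))]
  exact h


private lemma count_coprime_Ioc' (N a b : ℕ) (hab : a ≤ b) (hN : 0 < N) :
    ((((Finset.Ioc a b).filter (fun n => Nat.Coprime n N)).card : ℤ))
      = ∑ d ∈ N.divisors, (μ d : ℤ) * (((b / d : ℕ) : ℤ) - ((a / d : ℕ) : ℤ)) := by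
  have hsplit : (Finset.Ioc 0 a).filter (fun n => Nat.Coprime n N)
      ∪ (Finset.Ioc a b).filter (fun n => Nat.Coprime n N)
      = (Finset.Ioc 0 b).filter (fun n => Nat.Coprime n N) := by
    rw [← Finset.filter_union, Finset.Ioc_union_Ioc_eq_Ioc (Nat.zero_le a) hab]
  have hdisj : Disjoint ((Finset.Ioc 0 a).filter (fun n => Nat.Coprime n N))
      ((Finset.Ioc a b).filter (fun n => Nat.Coprime n N)) := by
    apply Finset.disjoint_filter_filter
    rw [Finset.disjoint_left]
    intro n h1 h2
    simp only [Finset.mem_Ioc] at h1 h2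
    omega
  have hcard := Finset.card_union_of_disjoint hdisj
  rw [hsplit] at hcard
  have h1 := count_coprime_Ioc N a hN
  have h2 := count_coprime_Ioc N b hN
  have : ((((Finset.Ioc a b).filter (fun n => Nat.Coprime n N)).card : ℤ))
      = ∑ d ∈ N.divisors, (μ d : ℤ) * ((b / d : ℕ) : ℤ)
        - ∑ d ∈ N.divisors, (μ d : ℤ) * ((a / d : ℕ) : ℤ) := by
    rw [← h1, ← h2]
    have := congrArg (Nat.cast : ℕ → ℤ) hcard
    push_cast at this
    linarith
  rw [this, ← Finset.sum_sub_distrib]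
  exact Finset.sum_congr rfl fun d hd => by ring

private lemma squarefree_510510 : Squarefree (510510:ℕ) := by
  rw [show (510510:ℕ) = 2*(3*(5*(7*(11*(13*17))))) by norm_num]
  repeat
    refine Nat.squarefree_mul_iff.mpr ⟨by norm_num, (Nat.Prime.prime (by norm_num)).squarefree, ?_⟩
  exact (Nat.Prime.prime (by norm_num)).squarefree

private lemma coprime_count_bound (a b : ℕ) (hab : a ≤ b) :
    510510 * ((((Finset.Ioc a b).filter (fun n => Nat.Coprime n 510510)).card : ℤ))
      ≤ 92160 * ((b : ℤ) - (a : ℤ)) + 128 * 510510 := by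
  have htot : Nat.totient 510510 = 92160 := by
    rw [show (510510:ℕ) = 2*(3*(5*(7*(11*(13*17))))) by norm_num]
    rw [Nat.totient_mul (by norm_num), Nat.totient_mul (by norm_num),
      Nat.totient_mul (by norm_num), Nat.totient_mul (by norm_num),
      Nat.totient_mul (by norm_num), Nat.totient_mul (by norm_num),
      Nat.totient_prime (by norm_num), Nat.totient_prime (by norm_num),
      Nat.totient_prime (by norm_num), Nat.totient_prime (by norm_num),
      Nat.totient_prime (by norm_num), Nat.totient_prime (by norm_num),
      Nat.totient_prime (by norm_num)]
  have hcard : (Nat.divisors 510510).card = 128 := by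
    have hp : ∀ p : ℕ, p.Prime → p.divisors.card = 2 := by
      intro p pp
      rw [pp.divisors, Finset.card_insert_of_notMem (by simp [pp.one_lt.ne]),
        Finset.card_singleton]
    rw [show (510510:ℕ) = 2*(3*(5*(7*(11*(13*17))))) by norm_num]
    rw [Nat.Coprime.card_divisors_mul (by norm_num), Nat.Coprime.card_divisors_mul (by norm_num),
      Nat.Coprime.card_divisors_mul (by norm_num), Nat.Coprime.card_divisors_mul (by norm_num),
      Nat.Coprime.card_divisors_mul (by norm_num), Nat.Coprime.card_divisors_mul (by norm_num),
      hp 2 (by norm_num), hp 3 (by norm_num), hp 5 (by norm_num), hp 7 (by norm_num),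
      hp 11 (by norm_num), hp 13 (by norm_num), hp 17 (by norm_num)]
  rw [count_coprime_Ioc' 510510 a b hab (by norm_num), Finset.mul_sum]
  have hterm : ∀ d ∈ (510510:ℕ).divisors,
      510510 * ((μ d : ℤ) * (((b / d : ℕ) : ℤ) - ((a / d : ℕ) : ℤ)))
        ≤ (μ d : ℤ) * ((510510 / d : ℕ) : ℤ) * ((b : ℤ) - (a : ℤ)) + 510510 := by
    intro d hd
    obtain ⟨hdvd, -⟩ := Nat.mem_divisors.mp hd
    have hd0 : 0 < d := Nat.pos_of_mem_divisors hd
    have hsqd : Squarefree d := squarefree_510510.squarefree_of_dvd hdvd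
    have hμ : (μ d : ℤ) = 1 ∨ (μ d : ℤ) = -1 := by
      rw [moebius_apply_of_squarefree hsqd]
      rcases Nat.even_or_odd (cardFactors d) with h | h
      · exact Or.inl h.neg_one_pow
      · exact Or.inr h.neg_one_pow
    have he : (d : ℤ) * ((510510 / d : ℕ) : ℤ) = 510510 := by
      exact_mod_cast congrArg (Nat.cast : ℕ → ℤ) (Nat.mul_div_cancel' hdvd)
    have hw : (0:ℤ) ≤ ((510510 / d : ℕ) : ℤ) := Int.natCast_nonneg _
    have hbe : (d : ℤ) * ((b / d : ℕ) : ℤ) + ((b % d : ℕ) : ℤ) = (b : ℤ) := by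
      exact_mod_cast congrArg (Nat.cast : ℕ → ℤ) (Nat.div_add_mod b d)
    have hae : (d : ℤ) * ((a / d : ℕ) : ℤ) + ((a % d : ℕ) : ℤ) = (a : ℤ) := by
      exact_mod_cast congrArg (Nat.cast : ℕ → ℤ) (Nat.div_add_mod a d)
    have hbr : ((b % d : ℕ) : ℤ) < d := by exact_mod_cast Nat.mod_lt b hd0
    have har : ((a % d : ℕ) : ℤ) < d := by exact_mod_cast Nat.mod_lt a hd0
    have hbr0 : (0:ℤ) ≤ ((b % d : ℕ) : ℤ) := Int.natCast_nonneg _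
    have har0 : (0:ℤ) ≤ ((a % d : ℕ) : ℤ) := Int.natCast_nonneg _
    set u : ℤ := ((b / d : ℕ) : ℤ)
    set v : ℤ := ((a / d : ℕ) : ℤ)
    rcases hμ with h | h <;> rw [h]
    · have key : (d:ℤ) * (u - v) ≤ ((b:ℤ) - a) + d := by linarith
      have h3 : ((510510 / d : ℕ) : ℤ) * ((d:ℤ) * (u - v))
          ≤ ((510510 / d : ℕ) : ℤ) * (((b:ℤ) - a) + d) := mul_le_mul_of_nonneg_left key hw
      nlinarith [h3, he]
    · have key : ((b:ℤ) - a) - d ≤ (d:ℤ) * (u - v) := by linarith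
      have h3 : ((510510 / d : ℕ) : ℤ) * (((b:ℤ) - a) - d)
          ≤ ((510510 / d : ℕ) : ℤ) * ((d:ℤ) * (u - v)) := mul_le_mul_of_nonneg_left key hw
      nlinarith [h3, he]
  calc ∑ d ∈ (510510:ℕ).divisors,
        510510 * ((μ d : ℤ) * (((b / d : ℕ) : ℤ) - ((a / d : ℕ) : ℤ)))
      ≤ ∑ d ∈ (510510:ℕ).divisors,
        ((μ d : ℤ) * ((510510 / d : ℕ) : ℤ) * ((b : ℤ) - (a : ℤ)) + 510510) :=
        Finset.sum_le_sum hterm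
    _ = (∑ d ∈ (510510:ℕ).divisors, (μ d : ℤ) * ((510510 / d : ℕ) : ℤ)) * ((b : ℤ) - (a : ℤ))
        + ((510510:ℕ).divisors.card : ℤ) * 510510 := by
        rw [Finset.sum_add_distrib, ← Finset.sum_mul, Finset.sum_const, nsmul_eq_mul]
    _ = 92160 * ((b : ℤ) - (a : ℤ)) + 128 * 510510 := by
        rw [moebius_totient_sum 510510 (by norm_num), htot, hcard]
        norm_num


private lemma coprime_510510 {p : ℕ} (hp : p.Prime) (h17 : 17 < p) :
    Nat.Coprime p 510510 := by
  rw [show (510510:ℕ) = 2*(3*(5*(7*(11*(13*17))))) by norm_num]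
  repeat' apply Nat.Coprime.mul_right
  all_goals exact (Nat.coprime_primes hp (by norm_num)).mpr (by omega)

theorem smooth_count_exceeds_half (q : ℕ) (hq : q.Prime) (hq4 : 10 ^ 4 < q) :
    Nat.totient (6 * q) = 2 * (q - 1) ∧
    q - 1 < {m : ℕ | 1 ≤ m ∧ m ≤ 6 * q ∧ Nat.Coprime m (6 * q) ∧
        ∀ p : ℕ, p.Prime → p ∣ m → p < q}.ncard := by
  classical
  have hq2 : 2 ≤ q := hq.two_le
  have hco6 : Nat.Coprime 6 q := by
    have h2 : Nat.Coprime 2 q := (Nat.coprime_primes Nat.prime_two hq).mpr (by omega)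
    have h3 : Nat.Coprime 3 q := (Nat.coprime_primes Nat.prime_three hq).mpr (by omega)
    have := h2.mul h3
    norm_num at this
    exact this
  have htot : Nat.totient (6 * q) = 2 * (q - 1) := by
    rw [Nat.totient_mul hco6, Nat.totient_prime hq, show Nat.totient 6 = 2 from by decide]
  refine ⟨htot, ?_⟩
  set C : Finset ℕ := (Finset.Ioc 0 (6*q)).filter (fun m => Nat.Coprime m (6*q)) with hCdef
  have hCcard : C.card = 2 * (q - 1) := by
    have hC : C = (Finset.range (6*q)).filter (fun m => (6*q).Coprime m) := by
      ext m
      simp only [hCdef, Finset.mem_filter, Finset.mem_Ioc, Finset.mem_range]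
      constructor
      · rintro ⟨⟨h0, h1⟩, h2⟩
        refine ⟨?_, h2.symm⟩
        rcases Nat.lt_or_ge m (6*q) with h | h
        · exact h
        · exfalso
          have hm : m = 6*q := le_antisymm h1 h
          rw [hm] at h2
          rw [Nat.Coprime, Nat.gcd_self] at h2
          omega
      · rintro ⟨h1, h2⟩
        have h2' : Nat.Coprime m (6*q) := h2.symm
        have h0 : 0 < m := by
          rcases Nat.eq_zero_or_pos m with h | h
          · rw [h] at h2'
            have := Nat.coprime_zero_left (6*q) |>.mp h2'
            omega
          · exact h
        exact ⟨⟨h0, le_of_lt h1⟩, h2'⟩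
    rw [hC, ← Nat.totient_eq_card_coprime, htot]
  set P : ℕ → Prop := fun m => ∀ p : ℕ, p.Prime → p ∣ m → p < q with hPdef
  set S : Finset ℕ := C.filter P with hSdef
  set T : Finset ℕ := C.filter (fun m => ¬ P m) with hTdef
  have hST : S.card + T.card = C.card := Finset.card_filter_add_card_filter_not _
  have hset : {m : ℕ | 1 ≤ m ∧ m ≤ 6 * q ∧ Nat.Coprime m (6 * q) ∧
      ∀ p : ℕ, p.Prime → p ∣ m → p < q} = ↑S := by
    ext m
    simp only [Set.mem_setOf_eq, hSdef, hCdef, Finset.coe_filter, Finset.mem_filter,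
      Finset.mem_Ioc, hPdef]
    constructor
    · rintro ⟨h1, h2, h3, h4⟩
      exact ⟨⟨⟨h1, h2⟩, h3⟩, h4⟩
    · rintro ⟨⟨⟨h1, h2⟩, h3⟩, h4⟩
      exact ⟨h1, h2, h3, h4⟩
  rw [hset, Set.ncard_coe_finset]
  set A : Finset ℕ := (Finset.Ioc q (6*q)).filter (fun n => Nat.Coprime n 510510) with hAdef
  set B : Finset ℕ := (Finset.Ioc q ((6*q)/5)).filter (fun n => Nat.Coprime n 510510) with hBdef
  have hTsub : T ⊆ A ∪ B.image (fun p => 5 * p) := by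
    intro m hm
    simp only [hTdef, hCdef, Finset.mem_filter, Finset.mem_Ioc, hPdef] at hm
    obtain ⟨⟨⟨hm0, hm6⟩, hmcop⟩, hnot⟩ := hm
    push_neg at hnot
    obtain ⟨p, hp, hpm, hpq⟩ := hnot
    have hpq' : q < p := by
      rcases Nat.lt_or_ge q p with h | h
      · exact h
      · exfalso
        have hpq2 : p = q := le_antisymm h hpq
        have hdvd : q ∣ Nat.gcd m (6*q) := Nat.dvd_gcd (hpq2 ▸ hpm) (dvd_mul_left q 6)
        rw [hmcop] at hdvd
        have := Nat.le_of_dvd one_pos hdvd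
        omega
    obtain ⟨k, hk⟩ := hpm
    have hk0 : 0 < k := by
      rcases Nat.eq_zero_or_pos k with h | h
      · rw [h, mul_zero] at hk; omega
      · exact h
    have hkcop : Nat.Coprime k 6 := by
      have h1 : Nat.Coprime k (6*q) :=
        Nat.Coprime.coprime_dvd_left ⟨p, by rw [hk]; ring⟩ hmcop
      exact h1.coprime_dvd_right (dvd_mul_right 6 q)
    have hk6 : k < 6 := by
      by_contra h
      push_neg at h
      have : 6 * q < p * k := by
        calc 6 * q < 6 * p := by omega
        _ ≤ p * 6 := by omega
        _ ≤ p * k := Nat.mul_le_mul_left p h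
      omega
    have hpcop : Nat.Coprime p 510510 := coprime_510510 hp (by omega)
    simp only [Finset.mem_union, hAdef, hBdef, Finset.mem_filter, Finset.mem_Ioc,
      Finset.mem_image]
    interval_cases k
    · left
      rw [mul_one] at hk
      exact ⟨⟨by omega, by omega⟩, hk ▸ hpcop⟩
    · exact absurd hkcop (by decide)
    · exact absurd hkcop (by decide)
    · exact absurd hkcop (by decide)
    · right
      refine ⟨p, ⟨⟨hpq', ?_⟩, hpcop⟩, by omega⟩
      rw [Nat.le_div_iff_mul_le (by norm_num)]
      omega
  have hTcard : T.card ≤ A.card + B.card := by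
    calc T.card ≤ (A ∪ B.image (fun p => 5 * p)).card := Finset.card_le_card hTsub
      _ ≤ A.card + (B.image (fun p => 5 * p)).card := Finset.card_union_le _ _
      _ ≤ A.card + B.card := Nat.add_le_add_left Finset.card_image_le _
  have hA := coprime_count_bound q (6*q) (by omega)
  have hB := coprime_count_bound q ((6*q)/5)
    ((Nat.le_div_iff_mul_le (by norm_num)).mpr (by omega))
  rw [← hAdef] at hA
  rw [← hBdef] at hB
  have c1 : ((6*q : ℕ) : ℤ) = 6 * (q:ℤ) := by push_cast; ring
  have h5 : 5 * (((6*q)/5 : ℕ) : ℤ) ≤ ((6*q : ℕ) : ℤ) := by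
    exact_mod_cast (by omega : 5 * ((6*q)/5) ≤ 6*q)
  have hq' : (10000:ℤ) < (q:ℤ) := by exact_mod_cast (by omega : 10000 < q)
  have hTc : (T.card : ℤ) ≤ (A.card : ℤ) + (B.card : ℤ) := by exact_mod_cast hTcard
  have hT3 : T.card + 2 ≤ q := by
    have : (T.card : ℤ) + 2 ≤ (q:ℤ) := by linarith
    exact_mod_cast this
  omega
end
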